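/- Given 1-marginals (u_{i,+,+}), (u_{+,j,+}), (u_{+,+,k}) and entry upper bounds (p_{i,j,k}) for 3-arrays of size (r,c,h), there exist 2-marginals (v_{i,j,+}), (v_{i,+,k}), (v_{+,j,k}) for 3-arrays of size (3, rc, r+c+h) such that the set of nonnegative real (r,c,h)-arrays x satisfying x ≤ p entrywise and the given 1-marginals is in bijection with the set of nonnegative real (3, rc, r+c+h)-arrays y satisfying the constructed 2-marginals, and this bijection maps integer arrays to integer arrays in both directions. -/

import Mathlib

/-!
Write `s = ∑ₖ x i j k` for the sum of cell `(i, j)`. In that cell the slim array `slimArray U p x`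
holds `x i j ·` and `U - s` (at `row i`) in layer 0, `p i j · - x i j ·` and `s` (at `col j`) in
layer 1, and `s` (at `row i`) and `U - s` (at `col j`) in layer 2; all its other entries vanish
(layers 0, 1, 2 are the paper's 1, 2, 3). Its line sums over the third and over the first index
depend only on `U` and `p`; those over the second index are the 1-marginals of `x` and three slacks
that these determine. A cell sum is at most its row and its column marginal, so
`U = min (max u₁) (max u₂)` keeps `U - s` nonnegative and `x ↦ slimArray U p x` maps the bounded
1-marginal polytope into the 2-marginal one. Conversely, nonnegativity kills every entry on a line
whose prescribed sum is zero, and the remaining line sums then express each entry through layer 0: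
every point of the 2-marginal polytope is the slim array of its layer 0. All entries are integer
combinations of `x`, `p` and `U`, which gives integrality in both directions.
-/

open Finset

namespace ThreeArray

section OneMarginals

variable {ι κ μ : Type*} [Fintype ι] [Fintype κ] [Fintype μ]

def cellSums (x : ι → κ → μ → ℝ) (a : ι × κ) : ℝ := ∑ k, x a.1 a.2 k

def rowSums (x : ι → κ → μ → ℝ) (i : ι) : ℝ := ∑ j, ∑ k, x i j k

def colSums (x : ι → κ → μ → ℝ) (j : κ) : ℝ := ∑ i, ∑ k, x i j k

def domSums (x : ι → κ → μ → ℝ) (k : μ) : ℝ := ∑ i, ∑ j, x i j k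

def boundedOneMarginalArrays (p : ι → κ → μ → ℝ) (u₁ : ι → ℝ) (u₂ : κ → ℝ) (u₃ : μ → ℝ) :
    Set (ι → κ → μ → ℝ) :=
  {x | (∀ i j k, 0 ≤ x i j k) ∧ (∀ i j k, x i j k ≤ p i j k) ∧
    (∀ i, rowSums x i = u₁ i) ∧ (∀ j, colSums x j = u₂ j) ∧ (∀ k, domSums x k = u₃ k)}

variable {p x : ι → κ → μ → ℝ} {u₁ : ι → ℝ} {u₂ : κ → ℝ} {u₃ : μ → ℝ} {U : ℝ}

theorem cellSums_le (hx : x ∈ boundedOneMarginalArrays p u₁ u₂ u₃)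
    (hU : (∀ i, u₁ i ≤ U) ∨ ∀ j, u₂ j ≤ U) (a : ι × κ) : cellSums x a ≤ U := by
  obtain ⟨hx0, -, h₁, h₂, -⟩ := hx
  have hcell (i j) : 0 ≤ ∑ k, x i j k := sum_nonneg fun k _ => hx0 i j k
  rcases hU with hU | hU
  · calc cellSums x a ≤ rowSums x a.1 :=
          single_le_sum (f := fun j => ∑ k, x a.1 j k) (fun j _ => hcell _ j) (mem_univ a.2)
      _ = u₁ a.1 := h₁ a.1
      _ ≤ U := hU a.1
  · calc cellSums x a ≤ colSums x a.2 :=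
          single_le_sum (f := fun i => ∑ k, x i a.2 k) (fun i _ => hcell i _) (mem_univ a.1)
      _ = u₂ a.2 := h₂ a.2
      _ ≤ U := hU a.2

theorem oneMarginals_le_of_mem (hx : x ∈ boundedOneMarginalArrays p u₁ u₂ u₃)
    (hU : (∀ i, u₁ i ≤ U) ∨ ∀ j, u₂ j ≤ U) :
    (∀ i, u₁ i ≤ Fintype.card κ * U) ∧ (∀ j, u₂ j ≤ Fintype.card ι * U) ∧
      ∀ k, u₃ k ≤ ∑ i, ∑ j, p i j k := by
  have hcell := cellSums_le hx hU
  obtain ⟨-, hxp, h₁, h₂, h₃⟩ := hx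
  refine ⟨fun i => ?_, fun j => ?_, fun k => ?_⟩
  · calc u₁ i = ∑ j, cellSums x (i, j) := (h₁ i).symm
      _ ≤ ∑ _j : κ, U := sum_le_sum fun j _ => hcell (i, j)
      _ = Fintype.card κ * U := by simp
  · calc u₂ j = ∑ i, cellSums x (i, j) := (h₂ j).symm
      _ ≤ ∑ _i : ι, U := sum_le_sum fun i _ => hcell (i, j)
      _ = Fintype.card ι * U := by simp
  · rw [← h₃ k]
    exact sum_le_sum fun i _ => sum_le_sum fun j _ => hxp i j k

end OneMarginals

section TwoMarginals

variable {τ α γ : Type*} [Fintype τ] [Fintype α] [Fintype γ]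

def twoMarginalArrays (v₁₂ : τ → α → ℝ) (v₁₃ : τ → γ → ℝ) (v₂₃ : α → γ → ℝ) :
    Set (τ → α → γ → ℝ) :=
  {y | (∀ t a g, 0 ≤ y t a g) ∧ (∀ t a, ∑ g, y t a g = v₁₂ t a) ∧
    (∀ t g, ∑ a, y t a g = v₁₃ t g) ∧ (∀ a g, ∑ t, y t a g = v₂₃ a g)}

variable {v₁₂ : τ → α → ℝ} {v₁₃ : τ → γ → ℝ} {v₂₃ : α → γ → ℝ} {y : τ → α → γ → ℝ}

theorem apply_eq_zero_of_margin₁₃_eq_zero (hy : y ∈ twoMarginalArrays v₁₂ v₁₃ v₂₃) {t : τ}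
    {g : γ} (h : v₁₃ t g = 0) (a : α) : y t a g = 0 :=
  congrFun ((Fintype.sum_eq_zero_iff_of_nonneg fun a => hy.1 t a g).1 ((hy.2.2.1 t g).trans h)) a

theorem apply_eq_zero_of_margin₂₃_eq_zero (hy : y ∈ twoMarginalArrays v₁₂ v₁₃ v₂₃) {a : α}
    {g : γ} (h : v₂₃ a g = 0) (t : τ) : y t a g = 0 :=
  congrFun ((Fintype.sum_eq_zero_iff_of_nonneg fun t => hy.1 t a g).1 ((hy.2.2.2 a g).trans h)) t

end TwoMarginals

section Slim

variable {ι κ μ : Type*} [Fintype μ] [DecidableEq ι] [DecidableEq κ]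

def slimArray (U : ℝ) (p x : ι → κ → μ → ℝ) : Fin 3 → ι × κ → μ ⊕ ι ⊕ κ → ℝ :=
  ![fun a => Sum.elim (x a.1 a.2) (Sum.elim (Pi.single a.1 (U - cellSums x a)) 0),
    fun a => Sum.elim (p a.1 a.2 - x a.1 a.2) (Sum.elim 0 (Pi.single a.2 (cellSums x a))),
    fun a => Sum.elim 0
      (Sum.elim (Pi.single a.1 (cellSums x a)) (Pi.single a.2 (U - cellSums x a)))]

variable {R : Type*}

def slimMargin₁₂ [AddCommMonoid R] (U : R) (p : ι → κ → μ → R) : Fin 3 → ι × κ → R :=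
  ![fun _ => U, fun a => ∑ k, p a.1 a.2 k, fun _ => U]

/-- The slacks `w₁ w₂ w₃` stand for `|κ| • U - u₁`, `|ι| • U - u₂` and `∑ᵢ ∑ⱼ p i j · - u₃`. Keeping
them free lets ℕ-valued marginals use truncated subtraction: the slacks only need their true values
when the 1-marginal polytope is nonempty. -/
def slimMargin₁₃ [Zero R] (u₁ : ι → R) (u₂ : κ → R) (u₃ : μ → R) (w₁ : ι → R) (w₂ : κ → R)
    (w₃ : μ → R) : Fin 3 → μ ⊕ ι ⊕ κ → R :=
  ![Sum.elim u₃ (Sum.elim w₁ 0), Sum.elim w₃ (Sum.elim 0 u₂), Sum.elim 0 (Sum.elim u₁ w₂)]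

def slimMargin₂₃ [Zero R] (U : R) (p : ι → κ → μ → R) : ι × κ → μ ⊕ ι ⊕ κ → R :=
  fun a => Sum.elim (p a.1 a.2) (Sum.elim (Pi.single a.1 U) (Pi.single a.2 U))

variable (U : ℝ) (p x : ι → κ → μ → ℝ)

theorem sum_slimArray_eq_slimMargin₂₃ (a : ι × κ) (g : μ ⊕ ι ⊕ κ) :
    ∑ t, slimArray U p x t a g = slimMargin₂₃ U p a g := by
  rcases g with k | i | j <;>
    simp [slimArray, slimMargin₂₃, Fin.sum_univ_three, Pi.single_apply] <;> split_ifs <;> simp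

variable {U p x} in
theorem slimArray_nonneg (hx0 : ∀ i j k, 0 ≤ x i j k) (hxp : ∀ i j k, x i j k ≤ p i j k)
    (hcell : ∀ a, cellSums x a ≤ U) (t : Fin 3) (a : ι × κ) (g : μ ⊕ ι ⊕ κ) :
    0 ≤ slimArray U p x t a g := by
  have hs : 0 ≤ cellSums x a := sum_nonneg fun k _ => hx0 a.1 a.2 k
  fin_cases t <;> rcases g with k | i | j <;>
    simp [slimArray, Pi.single_apply, hx0, hxp] <;> split_ifs <;> simp [hs, hcell]

variable {U p x} in
theorem slimArray_mem_iff (G : AddSubgroup ℝ) (hU : U ∈ G) (hp : ∀ i j k, p i j k ∈ G) :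
    (∀ t a g, slimArray U p x t a g ∈ G) ↔ ∀ i j k, x i j k ∈ G := by
  refine ⟨fun h i j k => by simpa [slimArray] using h 0 (i, j) (.inl k), fun hx t a g => ?_⟩
  have hs : cellSums x a ∈ G := G.sum_mem fun k _ => hx a.1 a.2 k
  have hsub : U - cellSums x a ∈ G := G.sub_mem hU hs
  fin_cases t <;> rcases g with k | i | j <;>
    simp [slimArray, Pi.single_apply, apply_ite (· ∈ G), hx, hs, hsub,
      G.sub_mem (hp _ _ _) (hx _ _ _)]

variable [Fintype ι] [Fintype κ]

theorem sum_slimArray_eq_slimMargin₁₂ (t : Fin 3) (a : ι × κ) :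
    ∑ g, slimArray U p x t a g = slimMargin₁₂ U p t a := by
  fin_cases t <;> simp [slimArray, slimMargin₁₂, Fintype.sum_sum_type, cellSums, sum_sub_distrib]

theorem sum_slimArray_eq_slimMargin₁₃ (t : Fin 3) (g : μ ⊕ ι ⊕ κ) :
    ∑ a, slimArray U p x t a g =
      slimMargin₁₃ (rowSums x) (colSums x) (domSums x) (fun i => Fintype.card κ * U - rowSums x i)
        (fun j => Fintype.card ι * U - colSums x j) (fun k => ∑ i, ∑ j, p i j k - domSums x k)
        t g := by
  fin_cases t <;> rcases g with k | i | j <;>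
    simp [slimArray, slimMargin₁₃, Fintype.sum_prod_type, rowSums, colSums, domSums, cellSums,
      Pi.single_apply, sum_sub_distrib]

variable {U p x}

theorem slimArray_mem_twoMarginalArrays {u₁ : ι → ℝ} {u₂ : κ → ℝ} {u₃ : μ → ℝ}
    (hx : x ∈ boundedOneMarginalArrays p u₁ u₂ u₃) (hU : (∀ i, u₁ i ≤ U) ∨ ∀ j, u₂ j ≤ U) :
    slimArray U p x ∈ twoMarginalArrays (slimMargin₁₂ U p)
      (slimMargin₁₃ u₁ u₂ u₃ (fun i => Fintype.card κ * U - u₁ i)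
        (fun j => Fintype.card ι * U - u₂ j) (fun k => ∑ i, ∑ j, p i j k - u₃ k))
      (slimMargin₂₃ U p) := by
  have hcell := cellSums_le hx hU
  obtain ⟨hx0, hxp, h₁, h₂, h₃⟩ := hx
  refine ⟨slimArray_nonneg hx0 hxp hcell, sum_slimArray_eq_slimMargin₁₂ U p x, fun t g => ?_,
    sum_slimArray_eq_slimMargin₂₃ U p x⟩
  rw [sum_slimArray_eq_slimMargin₁₃, funext h₁, funext h₂, funext h₃]

theorem mem_of_slimArray_mem {u₁ : ι → ℝ} {u₂ : κ → ℝ} {u₃ : μ → ℝ} {w₁ : ι → ℝ} {w₂ : κ → ℝ}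
    {w₃ : μ → ℝ} (hy : slimArray U p x ∈ twoMarginalArrays (slimMargin₁₂ U p)
      (slimMargin₁₃ u₁ u₂ u₃ w₁ w₂ w₃) (slimMargin₂₃ U p)) :
    x ∈ boundedOneMarginalArrays p u₁ u₂ u₃ := by
  obtain ⟨hy0, -, h₁₃, -⟩ := hy
  simp only [sum_slimArray_eq_slimMargin₁₃] at h₁₃
  refine ⟨fun i j k => ?_, fun i j k => ?_, fun i => ?_, fun j => ?_, fun k => ?_⟩
  · simpa [slimArray] using hy0 0 (i, j) (.inl k)
  · simpa [slimArray] using hy0 1 (i, j) (.inl k)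
  · simpa [slimMargin₁₃] using h₁₃ 2 (.inr (.inl i))
  · simpa [slimMargin₁₃] using h₁₃ 1 (.inr (.inr j))
  · simpa [slimMargin₁₃] using h₁₃ 0 (.inl k)

theorem zero_entries_of_mem {u₁ : ι → ℝ} {u₂ : κ → ℝ} {u₃ : μ → ℝ} {w₁ : ι → ℝ} {w₂ : κ → ℝ}
    {w₃ : μ → ℝ} {y : Fin 3 → ι × κ → μ ⊕ ι ⊕ κ → ℝ} (hy : y ∈ twoMarginalArrays
      (slimMargin₁₂ U p) (slimMargin₁₃ u₁ u₂ u₃ w₁ w₂ w₃) (slimMargin₂₃ U p)) :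
    (∀ t a i, i ≠ (a : ι × κ).1 → y t a (.inr (.inl i)) = 0) ∧
      (∀ t a j, j ≠ (a : ι × κ).2 → y t a (.inr (.inr j)) = 0) ∧
      (∀ a j, y 0 a (.inr (.inr j)) = 0) ∧ (∀ a i, y 1 a (.inr (.inl i)) = 0) ∧
      ∀ a k, y 2 a (.inl k) = 0 :=
  ⟨fun t _ _ hi => apply_eq_zero_of_margin₂₃_eq_zero hy (by simp [slimMargin₂₃, hi]) t,
    fun t _ _ hj => apply_eq_zero_of_margin₂₃_eq_zero hy (by simp [slimMargin₂₃, hj]) t,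
    fun a _ => apply_eq_zero_of_margin₁₃_eq_zero hy (by simp [slimMargin₁₃]) a,
    fun a _ => apply_eq_zero_of_margin₁₃_eq_zero hy (by simp [slimMargin₁₃]) a,
    fun a _ => apply_eq_zero_of_margin₁₃_eq_zero hy (by simp [slimMargin₁₃]) a⟩

theorem eq_slimArray_of_mem {u₁ : ι → ℝ} {u₂ : κ → ℝ} {u₃ : μ → ℝ} {w₁ : ι → ℝ} {w₂ : κ → ℝ}
    {w₃ : μ → ℝ} {y : Fin 3 → ι × κ → μ ⊕ ι ⊕ κ → ℝ} (hy : y ∈ twoMarginalArrays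
      (slimMargin₁₂ U p) (slimMargin₁₃ u₁ u₂ u₃ w₁ w₂ w₃) (slimMargin₂₃ U p)) :
    y = slimArray U p (fun i j k => y 0 (i, j) (.inl k)) := by
  obtain ⟨off_row, off_col, col₀, row₁, dom₂⟩ := zero_entries_of_mem hy
  have layer (t a) : ∑ g, y t a g =
      ∑ k, y t a (.inl k) + y t a (.inr (.inl a.1)) + y t a (.inr (.inr a.2)) := by
    rw [Fintype.sum_sum_type, Fintype.sum_sum_type, Fintype.sum_eq_single a.1 (off_row t a),
      Fintype.sum_eq_single a.2 (off_col t a), add_assoc]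
  funext t a g
  obtain ⟨i₀, j₀⟩ := a
  have h₀ := hy.2.1 0 (i₀, j₀)
  have h₂ := hy.2.1 2 (i₀, j₀)
  have hrow := hy.2.2.2 (i₀, j₀) (.inr (.inl i₀))
  have hcol := hy.2.2.2 (i₀, j₀) (.inr (.inr j₀))
  simp only [layer, slimMargin₁₂, slimMargin₂₃, Fin.sum_univ_three] at h₀ h₂ hrow hcol
  simp [col₀, row₁, dom₂] at h₀ h₂ hrow hcol
  fin_cases t <;> rcases g with k | i | j <;>
    simp [slimArray, cellSums, Pi.single_apply, col₀, row₁, dom₂]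
  · split_ifs with h
    · subst h; linarith
    · exact off_row _ _ _ h
  · have hdom := hy.2.2.2 (i₀, j₀) (.inl k)
    simp [slimMargin₂₃, Fin.sum_univ_three, dom₂] at hdom
    linarith
  · split_ifs with h
    · subst h; linarith
    · exact off_col _ _ _ h
  · split_ifs with h
    · subst h; linarith
    · exact off_row _ _ _ h
  · split_ifs with h
    · subst h; linarith
    · exact off_col _ _ _ h

def slimEquiv {u₁ : ι → ℝ} {u₂ : κ → ℝ} {u₃ : μ → ℝ} {w₁ : ι → ℝ} {w₂ : κ → ℝ} {w₃ : μ → ℝ}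
    (hU : (∀ i, u₁ i ≤ U) ∨ ∀ j, u₂ j ≤ U)
    (hw : (boundedOneMarginalArrays p u₁ u₂ u₃).Nonempty →
      w₁ = (fun i => Fintype.card κ * U - u₁ i) ∧ w₂ = (fun j => Fintype.card ι * U - u₂ j) ∧
        w₃ = fun k => ∑ i, ∑ j, p i j k - u₃ k) :
    boundedOneMarginalArrays p u₁ u₂ u₃ ≃
      twoMarginalArrays (slimMargin₁₂ U p) (slimMargin₁₃ u₁ u₂ u₃ w₁ w₂ w₃) (slimMargin₂₃ U p) where
  toFun x := ⟨slimArray U p x, by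
    obtain ⟨rfl, rfl, rfl⟩ := hw ⟨x, x.2⟩
    exact slimArray_mem_twoMarginalArrays x.2 hU⟩
  invFun y := ⟨fun i j k => y.1 0 (i, j) (.inl k),
    mem_of_slimArray_mem (eq_slimArray_of_mem y.2 ▸ y.2)⟩
  left_inv _ := rfl
  right_inv y := Subtype.ext (eq_slimArray_of_mem y.2).symm

end Slim

section NatCast

variable {ι κ μ : Type*}

theorem twoMarginalArrays_slimMargin_natCast [Fintype ι] [Fintype κ] [Fintype μ] [DecidableEq ι]
    [DecidableEq κ] (U : ℕ) (p : ι → κ → μ → ℕ) (u₁ w₁ : ι → ℕ) (u₂ w₂ : κ → ℕ) (u₃ w₃ : μ → ℕ) :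
    twoMarginalArrays (slimMargin₁₂ (U : ℝ) fun i j k => (p i j k : ℝ))
      (slimMargin₁₃ (fun i => (u₁ i : ℝ)) (fun j => (u₂ j : ℝ)) (fun k => (u₃ k : ℝ))
        (fun i => (w₁ i : ℝ)) (fun j => (w₂ j : ℝ)) (fun k => (w₃ k : ℝ)))
      (slimMargin₂₃ (U : ℝ) fun i j k => (p i j k : ℝ)) =
    twoMarginalArrays (fun t a => ((slimMargin₁₂ U p t a : ℕ) : ℝ))
      (fun t g => ((slimMargin₁₃ u₁ u₂ u₃ w₁ w₂ w₃ t g : ℕ) : ℝ))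
      (fun a g => ((slimMargin₂₃ U p a g : ℕ) : ℝ)) := by
  congr 1
  · funext t a; fin_cases t <;> simp [slimMargin₁₂]
  · funext t g; fin_cases t <;> rcases g with k | i | j <;> simp [slimMargin₁₃]
  · funext a g; rcases g with k | i | j <;> simp [slimMargin₂₃, Pi.single_apply]

theorem forall_le_min_sup_or_forall_le_min_sup {α β M : Type*} [Fintype α] [Fintype β]
    [LinearOrder M] [OrderBot M] (f : α → M) (g : β → M) :
    (∀ i, f i ≤ min (univ.sup f) (univ.sup g)) ∨ ∀ j, g j ≤ min (univ.sup f) (univ.sup g) := by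
  rcases le_total (univ.sup f) (univ.sup g) with h | h
  · exact .inl fun i => (min_eq_left h).symm ▸ le_sup (mem_univ i)
  · exact .inr fun j => (min_eq_right h).symm ▸ le_sup (mem_univ j)

theorem natCast_slacks_eq [Fintype ι] [Fintype κ] [Fintype μ] {p : ι → κ → μ → ℕ} {u₁ : ι → ℕ}
    {u₂ : κ → ℕ} {u₃ : μ → ℕ} {U : ℕ} (hU : (∀ i, (u₁ i : ℝ) ≤ U) ∨ ∀ j, (u₂ j : ℝ) ≤ U)
    (hS : (boundedOneMarginalArrays (fun i j k => (p i j k : ℝ)) (fun i => (u₁ i : ℝ))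
      (fun j => (u₂ j : ℝ)) (fun k => (u₃ k : ℝ))).Nonempty) :
    (fun i => ((Fintype.card κ * U - u₁ i : ℕ) : ℝ)) = (fun i => Fintype.card κ * (U : ℝ) - u₁ i) ∧
      (fun j => ((Fintype.card ι * U - u₂ j : ℕ) : ℝ)) =
        (fun j => Fintype.card ι * (U : ℝ) - u₂ j) ∧
      (fun k => ((∑ i, ∑ j, p i j k - u₃ k : ℕ) : ℝ)) =
        fun k => ∑ i, ∑ j, (p i j k : ℝ) - u₃ k := by
  obtain ⟨x, hx⟩ := hS
  obtain ⟨h₁, h₂, h₃⟩ := oneMarginals_le_of_mem hx hU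
  refine ⟨funext fun i => ?_, funext fun j => ?_, funext fun k => ?_⟩
  · rw [Nat.cast_sub (by exact_mod_cast h₁ i)]; push_cast; rfl
  · rw [Nat.cast_sub (by exact_mod_cast h₂ j)]; push_cast; rfl
  · rw [Nat.cast_sub (by exact_mod_cast h₃ k)]; push_cast; rfl

end NatCast

end ThreeArray

open ThreeArray

theorem embed_one_marginals_in_slim_two_marginals
    (r c h : ℕ) (u1 : Fin r → ℕ) (u2 : Fin c → ℕ) (u3 : Fin h → ℕ)
    (p : Fin r → Fin c → Fin h → ℕ) :
    ∃ (vA : Fin 3 → Fin r × Fin c → ℕ)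
      (vB : Fin 3 → (Fin h ⊕ Fin r ⊕ Fin c) → ℕ)
      (vC : Fin r × Fin c → (Fin h ⊕ Fin r ⊕ Fin c) → ℕ)
      (e : {x : Fin r → Fin c → Fin h → ℝ //
              (∀ i j k, 0 ≤ x i j k) ∧
              (∀ i j k, x i j k ≤ (p i j k : ℝ)) ∧
              (∀ i, ∑ j, ∑ k, x i j k = (u1 i : ℝ)) ∧
              (∀ j, ∑ i, ∑ k, x i j k = (u2 j : ℝ)) ∧
              (∀ k, ∑ i, ∑ j, x i j k = (u3 k : ℝ))} ≃
           {y : Fin 3 → Fin r × Fin c → (Fin h ⊕ Fin r ⊕ Fin c) → ℝ //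
              (∀ t a g, 0 ≤ y t a g) ∧
              (∀ t a, ∑ g, y t a g = (vA t a : ℝ)) ∧
              (∀ t g, ∑ a, y t a g = (vB t g : ℝ)) ∧
              (∀ a g, ∑ t, y t a g = (vC a g : ℝ))}),
      ∀ x, (∀ i j k, ∃ n : ℤ, x.1 i j k = (n : ℝ)) ↔
        (∀ t a g, ∃ n : ℤ, (e x).1 t a g = (n : ℝ)) := by
  set U := min (univ.sup u1) (univ.sup u2)
  have hU : (∀ i, (u1 i : ℝ) ≤ U) ∨ ∀ j, (u2 j : ℝ) ≤ U := by
    exact_mod_cast forall_le_min_sup_or_forall_le_min_sup u1 u2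
  let w₁ := fun i => Fintype.card (Fin c) * U - u1 i
  let w₂ := fun j => Fintype.card (Fin r) * U - u2 j
  let w₃ := fun k => ∑ i, ∑ j, p i j k - u3 k
  refine ⟨slimMargin₁₂ U p, slimMargin₁₃ u1 u2 u3 w₁ w₂ w₃, slimMargin₂₃ U p,
    (slimEquiv hU (natCast_slacks_eq hU)).trans
      (Equiv.setCongr (twoMarginalArrays_slimMargin_natCast U p u1 w₁ u2 w₂ u3 w₃)), fun x => ?_⟩
  have int_iff (v : ℝ) : (∃ n : ℤ, v = n) ↔ v ∈ AddSubgroup.zmultiples 1 := by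
    simp [AddSubgroup.mem_zmultiples_iff, eq_comm]
  simp only [int_iff]
  exact (slimArray_mem_iff _ ((int_iff U).1 ⟨U, by simp⟩)
    fun i j k => (int_iff (p i j k)).1 ⟨p i j k, by simp⟩).symm
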